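/- Let R ∈ ℝ^{d×N} with R ≠ 0 and let λ > 0. Then the matrix M = RᵀR + λ‖R‖₂²·I is positive definite, 1ᵀM⁻¹1 > 0, and the vector c^λ = M⁻¹1 / (1ᵀM⁻¹1) satisfies ‖c^λ‖₂ ≤ (1/√N)·√(1 + 1/λ). -/

import Mathlib

open Matrix Polynomial

noncomputable def vecNorm {n : ℕ} (v : Fin n → ℝ) : ℝ := Real.sqrt (∑ i, v i ^ 2)

/-- Spectral norm of a rectangular real matrix. -/
noncomputable def specNorm {m n : ℕ} (A : Matrix (Fin m) (Fin n) ℝ) : ℝ :=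
  sSup ((fun v => vecNorm (A.mulVec v)) '' {v | vecNorm v ≤ 1})

/-!
The RNA weights `c = M⁻¹ 1 / (1ᵀ M⁻¹ 1)` minimise the quadratic form `xᵀ M x` over the
hyperplane `1ᵀ x = 1`. Since `M = RᵀR + s I` with `s = λ ‖R‖₂²`, we have
`s ‖x‖² ≤ xᵀ M x ≤ (‖R‖₂² + s) ‖x‖²`; comparing `c` with the uniform weights `1 / N` gives
`s ‖c‖² ≤ (‖R‖₂² + s) / N`, i.e. `‖c‖² ≤ (1 + 1/λ) / N`.
-/

namespace Matrix.PosDef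

variable {ι : Type*} [Fintype ι] {M : Matrix ι ι ℝ}

lemma dotProduct_mulVec_comm (hM : M.PosDef) (x y : ι → ℝ) :
    x ⬝ᵥ M *ᵥ y = y ⬝ᵥ M *ᵥ x := by
  rw [dotProduct_mulVec, ← mulVec_transpose, dotProduct_comm,
    ← conjTranspose_eq_transpose_of_trivial, hM.isHermitian.eq]

variable [DecidableEq ι]

lemma dotProduct_inv_mulVec_self_pos (hM : M.PosDef) {a : ι → ℝ} (ha : a ≠ 0) :
    0 < a ⬝ᵥ M⁻¹ *ᵥ a := by
  simpa only [star_trivial] using hM.inv.dotProduct_mulVec_pos ha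

end Matrix.PosDef

section HyperplaneMinimizer

variable {ι : Type*} [Fintype ι] [DecidableEq ι] {M : Matrix ι ι ℝ} {a : ι → ℝ}

noncomputable def hyperplaneMinimizer (M : Matrix ι ι ℝ) (a : ι → ℝ) : ι → ℝ :=
  (a ⬝ᵥ M⁻¹ *ᵥ a)⁻¹ • M⁻¹ *ᵥ a

lemma dotProduct_hyperplaneMinimizer (hM : M.PosDef) (ha : a ≠ 0) :
    a ⬝ᵥ hyperplaneMinimizer M a = 1 := by
  rw [hyperplaneMinimizer, dotProduct_smul, smul_eq_mul,
    inv_mul_cancel₀ (hM.dotProduct_inv_mulVec_self_pos ha).ne']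

lemma dotProduct_mulVec_hyperplaneMinimizer (hM : M.PosDef) {x : ι → ℝ} (hx : a ⬝ᵥ x = 1) :
    x ⬝ᵥ M *ᵥ hyperplaneMinimizer M a = (a ⬝ᵥ M⁻¹ *ᵥ a)⁻¹ := by
  rw [hyperplaneMinimizer, mulVec_smul, mulVec_mulVec, mul_nonsing_inv _ hM.det_pos.ne'.isUnit,
    one_mulVec, dotProduct_smul, dotProduct_comm x, hx, smul_eq_mul, mul_one]

/-- `u - c` is `M`-orthogonal to `c`, so `u ⬝ᵥ M *ᵥ u = c ⬝ᵥ M *ᵥ c + (u - c) ⬝ᵥ M *ᵥ (u - c)`. -/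
theorem hyperplaneMinimizer_dotProduct_mulVec_le (hM : M.PosDef) {u : ι → ℝ} (hu : a ⬝ᵥ u = 1) :
    hyperplaneMinimizer M a ⬝ᵥ M *ᵥ hyperplaneMinimizer M a ≤ u ⬝ᵥ M *ᵥ u := by
  set c := hyperplaneMinimizer M a
  have ha : a ≠ 0 := by rintro rfl; simp at hu
  have hcMc := dotProduct_mulVec_hyperplaneMinimizer hM (dotProduct_hyperplaneMinimizer hM ha)
  have huMc := dotProduct_mulVec_hyperplaneMinimizer hM hu
  have hcMu : c ⬝ᵥ M *ᵥ u = u ⬝ᵥ M *ᵥ c := hM.dotProduct_mulVec_comm c u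
  have := hM.posSemidef.dotProduct_mulVec_nonneg (u - c)
  rw [star_trivial, mulVec_sub, dotProduct_sub, sub_dotProduct, sub_dotProduct] at this
  linarith

end HyperplaneMinimizer

section RegularizedGram

variable {m n : Type*} [Fintype m] [Fintype n] [DecidableEq n]

lemma dotProduct_mulVec_transpose_mul_self_add_smul_one (R : Matrix m n ℝ) (s : ℝ)
    (x : n → ℝ) :
    x ⬝ᵥ (Rᵀ * R + s • 1) *ᵥ x = R *ᵥ x ⬝ᵥ R *ᵥ x + s * (x ⬝ᵥ x) := by
  rw [add_mulVec, dotProduct_add, smul_mulVec, one_mulVec, dotProduct_smul, smul_eq_mul,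
    ← mulVec_mulVec, dotProduct_mulVec, vecMul_transpose]

lemma posDef_transpose_mul_self_add_smul_one (R : Matrix m n ℝ) {s : ℝ} (hs : 0 < s) :
    (Rᵀ * R + s • 1).PosDef := by
  rw [← conjTranspose_eq_transpose_of_trivial]
  exact (PosDef.one.smul hs).posSemidef_add (posSemidef_conjTranspose_mul_self R)

end RegularizedGram

section SpectralNorm

open scoped Matrix.Norms.L2Operator

variable {m n : ℕ}

lemma vecNorm_eq_norm_toLp (v : Fin n → ℝ) : vecNorm v = ‖WithLp.toLp 2 v‖ := by
  simp [vecNorm, EuclideanSpace.norm_eq]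

lemma vecNorm_sq (v : Fin n → ℝ) : vecNorm v ^ 2 = v ⬝ᵥ v := by
  rw [vecNorm, Real.sq_sqrt (by positivity)]
  simp only [dotProduct, sq]

lemma specNorm_eq_l2_opNorm (A : Matrix (Fin m) (Fin n) ℝ) : specNorm A = ‖A‖ := by
  rw [l2_opNorm_def, ← ContinuousLinearMap.sSup_unitClosedBall_eq_norm, specNorm]
  congr 1
  ext r
  simp [vecNorm_eq_norm_toLp, toLpLin_apply, (WithLp.equiv 2 (Fin n → ℝ)).symm.surjective.exists]

lemma vecNorm_mulVec_le (A : Matrix (Fin m) (Fin n) ℝ) (v : Fin n → ℝ) :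
    vecNorm (A *ᵥ v) ≤ specNorm A * vecNorm v := by
  simpa [vecNorm_eq_norm_toLp, specNorm_eq_l2_opNorm] using A.l2_opNorm_mulVec (WithLp.toLp 2 v)

lemma specNorm_pos {A : Matrix (Fin m) (Fin n) ℝ} (hA : A ≠ 0) : 0 < specNorm A := by
  rw [specNorm_eq_l2_opNorm]
  exact norm_pos_iff.mpr hA

end SpectralNorm

lemma dotProduct_mulVec_transpose_mul_self_add_smul_one_le {m n : ℕ}
    (R : Matrix (Fin m) (Fin n) ℝ) (s : ℝ) (x : Fin n → ℝ) :
    x ⬝ᵥ (Rᵀ * R + s • 1) *ᵥ x ≤ (specNorm R ^ 2 + s) * (x ⬝ᵥ x) := by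
  have h : vecNorm (R *ᵥ x) ^ 2 ≤ (specNorm R * vecNorm x) ^ 2 :=
    pow_le_pow_left₀ (Real.sqrt_nonneg _) (vecNorm_mulVec_le R x) 2
  rw [mul_pow, vecNorm_sq, vecNorm_sq] at h
  rw [dotProduct_mulVec_transpose_mul_self_add_smul_one]
  linarith

/-- for `R ≠ 0` and `λ > 0`, the matrix `M = RᵀR + λ‖R‖₂²I` is positive definite,
`1ᵀM⁻¹1 > 0`, and the RNA weights `c^λ = M⁻¹1/(1ᵀM⁻¹1)` satisfy
`‖c^λ‖₂ ≤ (1/√N)·√(1+1/λ)`. -/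
theorem rna_weights_norm_bound
    (d N : ℕ) (R : Matrix (Fin d) (Fin N) ℝ) (hR : R ≠ 0) (lam : ℝ) (hlam : 0 < lam) :
    (Rᵀ * R + (lam * specNorm R ^ 2) • (1 : Matrix (Fin N) (Fin N) ℝ)).PosDef ∧
    0 < ∑ j, (Rᵀ * R + (lam * specNorm R ^ 2) • (1 : Matrix (Fin N) (Fin N) ℝ))⁻¹.mulVec
        (fun _ => (1 : ℝ)) j ∧
    vecNorm ((∑ j, (Rᵀ * R + (lam * specNorm R ^ 2) • (1 : Matrix (Fin N) (Fin N) ℝ))⁻¹.mulVec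
        (fun _ => (1 : ℝ)) j)⁻¹ •
      (Rᵀ * R + (lam * specNorm R ^ 2) • (1 : Matrix (Fin N) (Fin N) ℝ))⁻¹.mulVec
        (fun _ => (1 : ℝ))) ≤
      (1 / Real.sqrt N) * Real.sqrt (1 + 1 / lam) := by
  have hK : 0 < specNorm R ^ 2 := pow_pos (specNorm_pos hR) 2
  set s := lam * specNorm R ^ 2
  set M := Rᵀ * R + s • (1 : Matrix (Fin N) (Fin N) ℝ)
  have hM : M.PosDef := posDef_transpose_mul_self_add_smul_one R (mul_pos hlam hK)
  have : NeZero N := ⟨by rintro rfl; exact hR (Matrix.ext fun _ j => j.elim0)⟩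
  have hN : (0 : ℝ) < N := Nat.cast_pos.mpr (NeZero.pos N)
  change M.PosDef ∧ 0 < ∑ j, (M⁻¹ *ᵥ 1) j ∧ vecNorm ((∑ j, (M⁻¹ *ᵥ 1) j)⁻¹ • M⁻¹ *ᵥ 1) ≤ _
  simp only [← one_dotProduct]
  refine ⟨hM, hM.dotProduct_inv_mulVec_self_pos one_ne_zero, ?_⟩
  set c := hyperplaneMinimizer M 1
  set u : Fin N → ℝ := (N : ℝ)⁻¹ • 1
  have huu : u ⬝ᵥ u = (N : ℝ)⁻¹ := by
    simp only [u, dotProduct_smul, smul_dotProduct, one_dotProduct_one, Fintype.card_fin,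
      smul_eq_mul]
    field_simp
  have hu : 1 ⬝ᵥ u = 1 := by
    rw [dotProduct_smul, one_dotProduct_one, Fintype.card_fin, smul_eq_mul, inv_mul_cancel₀ hN.ne']
  have hcc : s * (c ⬝ᵥ c) ≤ (specNorm R ^ 2 + s) * (N : ℝ)⁻¹ := calc
    s * (c ⬝ᵥ c) ≤ c ⬝ᵥ M *ᵥ c := by
      rw [dotProduct_mulVec_transpose_mul_self_add_smul_one]
      linarith [vecNorm_sq (R *ᵥ c) ▸ sq_nonneg (vecNorm (R *ᵥ c))]
    _ ≤ u ⬝ᵥ M *ᵥ u := hyperplaneMinimizer_dotProduct_mulVec_le hM hu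
    _ ≤ _ := huu ▸ dotProduct_mulVec_transpose_mul_self_add_smul_one_le R s u
  have hcc_scaled : s * (c ⬝ᵥ c) ≤ s * ((N : ℝ)⁻¹ * (1 + 1 / lam)) :=
    hcc.trans_eq (by field_simp; ring)
  rw [one_div, ← Real.sqrt_inv, ← Real.sqrt_mul (by positivity)]
  exact Real.le_sqrt_of_sq_le (vecNorm_sq c ▸ le_of_mul_le_mul_left hcc_scaled (mul_pos hlam hK))
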